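/- Let E_X, E_Z > 0. Let μ be the probability measure on ℝ given by the mixture μ = (E_X/(E_X+E_Z))·ν + (E_Z/(E_X+E_Z))·δ_0, where ν is the exponential distribution with rate 1/(E_X+E_Z) and δ_0 is the Dirac measure at 0. Then the convolution of μ with the exponential distribution with rate 1/E_Z equals the exponential distribution with rate 1/(E_X+E_Z). (In particular, μ has mean E_X, and an input with law μ added to independent exponential noise with mean E_Z produces an exponentially distributed output with mean E_X + E_Z.) -/

import Mathlib

/-!
Everything is computed through characteristic functions. The exponential law of rate `r` has
characteristic function `r / (r - t i)`, so the mixture `(1 - l/m) Exp(l) + (l/m) δ₀` has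
`(1 - l/m) · l / (l - t i) + l/m = l (m - t i) / (m (l - t i))`, and multiplying by the
characteristic function `m / (m - t i)` of the noise leaves `l / (l - t i)`. With
`l = 1/(E_X+E_Z)` and `m = 1/E_Z` the mixture is the input law of the theorem, and its mean is
`(1 - l/m) / l = 1/l - 1/m = E_X`.
-/

open MeasureTheory ProbabilityTheory Complex Set

lemma integral_expMeasure {E : Type*} [NormedAddCommGroup E] [NormedSpace ℝ E] {r : ℝ}
    (hr : 0 ≤ r) (f : ℝ → E) :
    ∫ x, f x ∂expMeasure r = ∫ x in Ioi 0, (r * Real.exp (-(r * x))) • f x := by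
  have hpdf : ∀ x, (exponentialPDF r x).toReal • f x
      = (Ici 0).indicator (fun x ↦ (r * Real.exp (-(r * x))) • f x) x := by
    intro x
    by_cases hx : 0 ≤ x
    · rw [exponentialPDF_of_nonneg hx, ENNReal.toReal_ofReal (by positivity),
        indicator_of_mem (mem_Ici.2 hx)]
    · rw [exponentialPDF_of_neg (not_le.1 hx), indicator_of_notMem (by simpa using hx)]
      simp
  change ∫ x, f x ∂volume.withDensity (exponentialPDF r) = _
  rw [integral_withDensity_eq_integral_toReal_smul (f := exponentialPDF r)
    (measurable_exponentialPDFReal r).ennreal_ofReal (ae_of_all _ fun _ ↦ ENNReal.ofReal_lt_top)]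
  simp_rw [hpdf]
  rw [integral_indicator measurableSet_Ici, integral_Ici_eq_integral_Ioi]

lemma charFun_expMeasure {r : ℝ} (hr : 0 < r) (t : ℝ) :
    charFun (expMeasure r) t = r / (r - t * I) := by
  have hre : ((-r + t * I : ℂ)).re < 0 := by simpa using hr
  rw [charFun_apply_real, integral_expMeasure hr.le]
  calc ∫ x in Ioi (0 : ℝ), (r * Real.exp (-(r * x))) • cexp (t * x * I)
      = r * ∫ x in Ioi (0 : ℝ), cexp ((-r + t * I) * x) := by
        rw [← integral_const_mul]
        refine setIntegral_congr_fun measurableSet_Ioi fun x _ ↦ ?_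
        rw [Complex.real_smul, ofReal_mul, ofReal_exp, mul_assoc, ← Complex.exp_add]
        push_cast
        ring_nf
    _ = r / (r - t * I) := by
        rw [integral_exp_mul_complex_Ioi hre, ofReal_zero, mul_zero, Complex.exp_zero,
          show (r : ℂ) - t * I = -(-r + t * I) by ring, div_neg, mul_div_assoc']
        ring

lemma integral_id_expMeasure {r : ℝ} (hr : 0 < r) : ∫ x, x ∂expMeasure r = r⁻¹ := by
  rw [integral_expMeasure hr.le]
  calc ∫ x in Ioi (0 : ℝ), (r * Real.exp (-(r * x))) • x
      = r * ∫ x in Ioi (0 : ℝ), x ^ ((2 : ℝ) - 1) * Real.exp (-(r * x)) := by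
        rw [← integral_const_mul]
        refine setIntegral_congr_fun measurableSet_Ioi fun x _ ↦ ?_
        norm_num
        ring
    _ = r⁻¹ := by
        rw [Real.integral_rpow_mul_exp_neg_mul_Ioi two_pos hr, Real.Gamma_two, mul_one,
          Real.rpow_two]
        field_simp

section charFun

variable {E : Type*} [NormedAddCommGroup E] [InnerProductSpace ℝ E] [MeasurableSpace E]
  {μ ν : Measure E}

lemma integrable_cexp_inner_mul_I [OpensMeasurableSpace E] [IsFiniteMeasure μ] (t : E) :
    Integrable (fun x ↦ cexp (inner ℝ x t * I)) μ :=
  (integrable_const (1 : ℝ)).mono (by fun_prop) (by simp)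

lemma charFun_add_measure [OpensMeasurableSpace E] [IsFiniteMeasure μ] [IsFiniteMeasure ν]
    (t : E) :
    charFun (μ + ν) t = charFun μ t + charFun ν t := by
  simp only [charFun_apply]
  exact integral_add_measure (integrable_cexp_inner_mul_I t) (integrable_cexp_inner_mul_I t)

lemma charFun_smul_measure (c : ENNReal) (t : E) :
    charFun (c • μ) t = c.toReal * charFun μ t := by
  simp only [charFun_apply, integral_smul_measure, Complex.real_smul]

end charFun

noncomputable def expDiracMixture (l m : ℝ) : Measure ℝ :=
  ENNReal.ofReal (1 - l / m) • expMeasure l + ENNReal.ofReal (l / m) • Measure.dirac 0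

section expDiracMixture

variable {l m : ℝ}

lemma isFiniteMeasure_expDiracMixture (hl : 0 < l) : IsFiniteMeasure (expDiracMixture l m) := by
  have := isProbabilityMeasure_expMeasure hl
  have := (expMeasure l).smul_finite (c := ENNReal.ofReal (1 - l / m)) ENNReal.ofReal_ne_top
  have := (Measure.dirac (0 : ℝ)).smul_finite (c := ENNReal.ofReal (l / m)) ENNReal.ofReal_ne_top
  unfold expDiracMixture
  infer_instance

lemma charFun_expDiracMixture (hl : 0 < l) (hlm : l ≤ m) (t : ℝ) :
    charFun (expDiracMixture l m) t = (1 - l / m) * (l / (l - t * I)) + l / m := by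
  have := isProbabilityMeasure_expMeasure hl
  have hm : 0 < m := hl.trans_le hlm
  have := (expMeasure l).smul_finite (c := ENNReal.ofReal (1 - l / m)) ENNReal.ofReal_ne_top
  have := (Measure.dirac (0 : ℝ)).smul_finite (c := ENNReal.ofReal (l / m)) ENNReal.ofReal_ne_top
  rw [expDiracMixture, charFun_add_measure, charFun_smul_measure, charFun_smul_measure,
    charFun_expMeasure hl, charFun_dirac,
    ENNReal.toReal_ofReal (sub_nonneg.2 (div_le_one_of_le₀ hlm hm.le)),
    ENNReal.toReal_ofReal (by positivity)]
  simp

theorem expDiracMixture_conv_expMeasure (hl : 0 < l) (hlm : l ≤ m) :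
    (expDiracMixture l m).conv (expMeasure m) = expMeasure l := by
  have hm : 0 < m := hl.trans_le hlm
  have := isFiniteMeasure_expDiracMixture (m := m) hl
  have := isProbabilityMeasure_expMeasure hl
  have := isProbabilityMeasure_expMeasure hm
  refine Measure.ext_of_charFun (funext fun t ↦ ?_)
  have hl' : (l : ℂ) - t * I ≠ 0 := fun h ↦ by simpa [hl.ne'] using congrArg re h
  have hm' : (m : ℂ) - t * I ≠ 0 := fun h ↦ by simpa [hm.ne'] using congrArg re h
  have hm0 : (m : ℂ) ≠ 0 := by exact_mod_cast hm.ne'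
  rw [charFun_conv, charFun_expDiracMixture hl hlm, charFun_expMeasure hm, charFun_expMeasure hl]
  field_simp
  ring

theorem integral_id_expDiracMixture (hl : 0 < l) (hlm : l ≤ m) :
    ∫ x, x ∂expDiracMixture l m = l⁻¹ - m⁻¹ := by
  have hm : 0 < m := hl.trans_le hlm
  have hexp : Integrable (fun x ↦ x) (expMeasure l) :=
    Integrable.of_integral_ne_zero (by rw [integral_id_expMeasure hl]; positivity)
  have hdirac : Integrable (fun x : ℝ ↦ x) (Measure.dirac 0) := integrable_dirac (by simp)
  rw [expDiracMixture, integral_add_measure (hexp.smul_measure ENNReal.ofReal_ne_top)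
    (hdirac.smul_measure ENNReal.ofReal_ne_top), integral_smul_measure, integral_smul_measure,
    integral_dirac, integral_id_expMeasure hl,
    ENNReal.toReal_ofReal (sub_nonneg.2 (div_le_one_of_le₀ hlm hm.le)),
    smul_zero, add_zero, smul_eq_mul]
  field_simp

end expDiracMixture

theorem AEN_optimal_input_convolution (EX EZ : ℝ) (hEX : 0 < EX) (hEZ : 0 < EZ) :
    (ENNReal.ofReal (EX / (EX + EZ)) • expMeasure (1 / (EX + EZ)) +
          ENNReal.ofReal (EZ / (EX + EZ)) • Measure.dirac (0 : ℝ)).conv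
        (expMeasure (1 / EZ)) = expMeasure (1 / (EX + EZ)) ∧
      ∫ x, x ∂(ENNReal.ofReal (EX / (EX + EZ)) • expMeasure (1 / (EX + EZ)) +
          ENNReal.ofReal (EZ / (EX + EZ)) • Measure.dirac (0 : ℝ)) = EX := by
  have hsum : 0 < EX + EZ := by linarith
  have hl : 0 < 1 / (EX + EZ) := by positivity
  have hlm : 1 / (EX + EZ) ≤ 1 / EZ := one_div_le_one_div_of_le hEZ (by linarith)
  have hmixture : ENNReal.ofReal (EX / (EX + EZ)) • expMeasure (1 / (EX + EZ)) +
      ENNReal.ofReal (EZ / (EX + EZ)) • Measure.dirac (0 : ℝ) =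
      expDiracMixture (1 / (EX + EZ)) (1 / EZ) := by
    rw [expDiracMixture, show 1 / (EX + EZ) / (1 / EZ) = EZ / (EX + EZ) by field_simp,
      show 1 - EZ / (EX + EZ) = EX / (EX + EZ) by field_simp; ring]
  rw [hmixture, integral_id_expDiracMixture hl hlm]
  refine ⟨expDiracMixture_conv_expMeasure hl hlm, ?_⟩
  rw [one_div, one_div, inv_inv, inv_inv]
  ring
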